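/- arXiv:gr-qc/0103030 — 2 statements merged into one kernel-verified Lean document; each statement's English description precedes it below -/
import Mathlib

section
/- Let J ∈ ℝ³ be a fixed vector and let Ψ_J be the Bowen–York angular-momentum tensor. Then Ψ_J is divergence-free with respect to the flat metric on ℝ³ \ {0}: for every x ∈ ℝ³ \ {0} and every index b ∈ {1,2,3}, ∑_{a=1}^{3} ∂_a (Ψ_J)_{ab}(x) = 0, where ∂_a denotes the partial derivative in the a-th coordinate direction. -/
/-!
Away from the origin, with `r = |x|` and `c = J × x`, the tensor is `Ψ_J = 3 r⁻⁵ (x ⊗ c + c ⊗ x)`.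
Since `c` is linear in `x` with `∑ₐ ∂ₐ cₐ = 0`, the numerator has divergence
`∑ₐ ∂ₐ (xₐ c_b + cₐ x_b) = 3 c_b + c_b + c_b = 5 c_b`. The factor `r⁻⁵` has gradient `-5 r⁻⁷ x`,
which contracts with the numerator to `-5 r⁻⁷ (r² c_b + x_b (x · c)) = -5 r⁻⁵ c_b` because
`x · c = 0`. The two contributions cancel.
-/

/-- Cross product of two vectors in `ℝ³`. -/
def cross3 (u v : Fin 3 → ℝ) : Fin 3 → ℝ :=
  ![u 1 * v 2 - u 2 * v 1, u 2 * v 0 - u 0 * v 2, u 0 * v 1 - u 1 * v 0]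

/-- The Bowen–York angular-momentum tensor with spin parameter `J`:
`Ψ_J(x)_{ab} = (3/|x|³)·(n_a (J × n)_b + n_b (J × n)_a)` where `n = x/|x|`. -/
noncomputable def byTensor (J x : EuclideanSpace ℝ (Fin 3)) : Matrix (Fin 3) (Fin 3) ℝ :=
  fun a b =>
    (3 / ‖x‖ ^ 3) *
      ((x a / ‖x‖) * cross3 (fun i => J i) (fun i => x i / ‖x‖) b +
        (x b / ‖x‖) * cross3 (fun i => J i) (fun i => x i / ‖x‖) a)

open Matrix

local notation "ℝ³" => EuclideanSpace ℝ (Fin 3)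

section InvNormPow

variable {E : Type*} [NormedAddCommGroup E] [InnerProductSpace ℝ E] {x : E}

theorem hasFDerivAt_norm_of_ne_zero (hx : x ≠ 0) :
    HasFDerivAt (‖·‖) (‖x‖⁻¹ • innerSL ℝ x) x := by
  have h := (hasStrictFDerivAt_norm_sq x).hasFDerivAt.sqrt (by positivity)
  simp only [Real.sqrt_sq (norm_nonneg _)] at h
  refine h.congr_fderiv ?_
  ext v
  simp
  field_simp

theorem hasFDerivAt_inv_norm_pow (hx : x ≠ 0) (n : ℕ) :
    HasFDerivAt (fun y : E => (‖y‖ ^ n)⁻¹) ((-(n : ℝ) * (‖x‖ ^ (n + 2))⁻¹) • innerSL ℝ x) x := by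
  refine ((hasDerivAt_inv (pow_ne_zero n (norm_ne_zero_iff.2 hx))).comp_hasFDerivAt x
    ((hasFDerivAt_norm_of_ne_zero hx).pow n)).congr_fderiv ?_
  have : ‖x‖ ≠ 0 := norm_ne_zero_iff.2 hx
  ext v
  rcases n with _ | n
  · simp
  simp
  field_simp
  ring

end InvNormPow

section CrossProduct

variable (J x : Fin 3 → ℝ)

theorem cross3_eq_crossProduct : cross3 J x = J ⨯₃ x := rfl

theorem sum_mul_cross_single_apply (b : Fin 3) :
    ∑ a, x a * (J ⨯₃ Pi.single a 1) b = (J ⨯₃ x) b := by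
  conv_rhs => rw [pi_eq_sum_univ' x]
  simp [map_sum, Finset.sum_apply]

theorem sum_cross_single_apply_self : ∑ a, (J ⨯₃ Pi.single a 1) a = 0 := by
  simp [Fin.sum_univ_three, cross_apply]

def byNumerator : Matrix (Fin 3) (Fin 3) ℝ :=
  vecMulVec x (J ⨯₃ x) + vecMulVec (J ⨯₃ x) x

theorem sum_byNumerator_mul_self (b : Fin 3) :
    ∑ a, byNumerator J x a b * x a = (x ⬝ᵥ x) * (J ⨯₃ x) b := by
  calc ∑ a, byNumerator J x a b * x a = (x ⬝ᵥ x) * (J ⨯₃ x) b + x b * (x ⬝ᵥ J ⨯₃ x) := by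
        simp only [byNumerator, Matrix.add_apply, vecMulVec_apply, dotProduct, Finset.sum_mul,
          Finset.mul_sum, ← Finset.sum_add_distrib]
        exact Finset.sum_congr rfl fun a _ => by ring
    _ = (x ⬝ᵥ x) * (J ⨯₃ x) b := by rw [dot_cross_self, mul_zero, add_zero]

theorem sum_byNumerator_partial (b : Fin 3) :
    ∑ a, ((Pi.single a 1 : Fin 3 → ℝ) a * (J ⨯₃ x) b + x a * (J ⨯₃ Pi.single a 1) b +
      (J ⨯₃ Pi.single a 1) a * x b + (J ⨯₃ x) a * (Pi.single a 1 : Fin 3 → ℝ) b) =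
      5 * (J ⨯₃ x) b := by
  simp only [Finset.sum_add_distrib, ← Finset.sum_mul, sum_mul_cross_single_apply,
    sum_cross_single_apply_self]
  simp [Pi.single_apply]
  ring

end CrossProduct

theorem byTensor_eq_smul_byNumerator (J : ℝ³) {y : ℝ³} (hy : y ≠ 0) :
    byTensor J y = (3 * (‖y‖ ^ 5)⁻¹) • byNumerator J y := by
  have hn : ‖y‖ ≠ 0 := norm_ne_zero_iff.2 hy
  have hscale : (fun i => y i / ‖y‖) = ‖y‖⁻¹ • y.ofLp := by
    ext i
    simp [div_eq_inv_mul]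
  ext a b
  simp only [byTensor, cross3_eq_crossProduct, hscale, map_smul, byNumerator, Matrix.add_apply,
    vecMulVec_apply, Matrix.smul_apply, Pi.smul_apply, smul_eq_mul]
  field_simp

theorem hasFDerivAt_cross_apply (J : Fin 3 → ℝ) (i : Fin 3) (x : ℝ³) :
    HasFDerivAt (fun y : ℝ³ => (J ⨯₃ y) i)
      (ContinuousLinearMap.proj i ∘L LinearMap.toContinuousLinearMap
        (crossProduct J ∘ₗ (WithLp.linearEquiv 2 ℝ (Fin 3 → ℝ)).toLinearMap)) x :=
  (ContinuousLinearMap.hasFDerivAt _).congr_of_eventuallyEq (.of_forall fun y => by simp)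

theorem fderiv_byTensor_apply (J : ℝ³) {x : ℝ³} (hx : x ≠ 0) (a b : Fin 3) (v : ℝ³) :
    fderiv ℝ (fun y : ℝ³ => byTensor J y a b) x v =
      3 * ((‖x‖ ^ 5)⁻¹ *
          (v a * (J ⨯₃ x) b + x a * (J ⨯₃ v) b + (J ⨯₃ v) a * x b + (J ⨯₃ x) a * v b) -
        5 * (‖x‖ ^ 7)⁻¹ * (byNumerator J x a b * inner ℝ x v)) := by
  have hcoord (i : Fin 3) : HasFDerivAt (fun y : ℝ³ => y i) (EuclideanSpace.proj i : ℝ³ →L[ℝ] ℝ) x :=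
    (ContinuousLinearMap.hasFDerivAt _).congr_of_eventuallyEq (.of_forall fun y => by simp)
  have hnumerator := ((hcoord a).mul (hasFDerivAt_cross_apply J b x)).add
    ((hasFDerivAt_cross_apply J a x).mul (hcoord b))
  have htensor := ((hasFDerivAt_inv_norm_pow hx 5).const_mul 3).mul hnumerator
  have heq : (fun y : ℝ³ => byTensor J y a b) =ᶠ[nhds x]
      fun y => 3 * (‖y‖ ^ 5)⁻¹ * (y a * (J ⨯₃ y) b + (J ⨯₃ y) a * y b) := by
    filter_upwards [isOpen_compl_singleton.mem_nhds hx] with y hy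
    simp [byTensor_eq_smul_byNumerator J hy, byNumerator, vecMulVec_apply]
  rw [(htensor.congr_of_eventuallyEq heq).fderiv]
  simp [byNumerator, vecMulVec_apply]
  ring

/-- The Bowen–York tensor is divergence-free with respect to the flat metric on
`ℝ³ \ {0}`: for every `x ≠ 0` and every index `b`, `∑ₐ ∂ₐ (Ψ_J)_{ab}(x) = 0`. -/
theorem byTensor_divergenceFree (J : EuclideanSpace ℝ (Fin 3))
    (x : EuclideanSpace ℝ (Fin 3)) (hx : x ≠ 0) (b : Fin 3) :
    ∑ a : Fin 3,
      fderiv ℝ (fun y : EuclideanSpace ℝ (Fin 3) => byTensor J y a b) x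
        (EuclideanSpace.single a 1) = 0 := by
  have hnorm : x.ofLp ⬝ᵥ x.ofLp = ‖x‖ ^ 2 := by
    rw [EuclideanSpace.real_norm_sq_eq]
    simp [dotProduct, sq]
  calc _ = 3 * ((‖x‖ ^ 5)⁻¹ * (5 * (J ⨯₃ x) b) -
        5 * (‖x‖ ^ 7)⁻¹ * ((x ⬝ᵥ x) * (J ⨯₃ x) b)) := by
        simp only [fderiv_byTensor_apply J hx, PiLp.ofLp_single,
          EuclideanSpace.inner_single_right, conj_trivial, one_mul]
        rw [← Finset.mul_sum, Finset.sum_sub_distrib, ← Finset.mul_sum, ← Finset.mul_sum,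
          sum_byNumerator_partial, sum_byNumerator_mul_self]
    _ = 0 := by
      rw [hnorm]
      field_simp
      ring
end

section
/- Let y ∈ ℝ⁴ with |y| = 1, and let Ω = { x ∈ ℝ⁴ : |x| > ⟨x, y⟩ } (that is, ℝ⁴ with the closed ray { t·y : t ≥ 0 } removed). Then the function F : Ω → ℝ defined by F(x) = 1/√( |x| − ⟨x, y⟩ ) is harmonic on Ω: its Euclidean Laplacian ∑_{a=1}^{4} ∂²F/∂x_a² vanishes identically on Ω. -/
/-!
With `g x = ‖x‖ - ⟪x, y⟫` we have `F = g ^ (-1/2)`. For any exponent `s` the chain rule gives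
`∂ᵥ²(g ^ s) = s (s - 1) g ^ (s - 2) (∂ᵥ g)² + s g ^ (s - 1) ∂ᵥ² g`. Summed over an orthonormal
basis of an `n`-dimensional space, `|∇g|² = 2 g / ‖x‖` (because `‖y‖ = 1`) and `Δg = (n - 1) / ‖x‖`,
so `Δ(g ^ s) = s (2 s + n - 3) g ^ (s - 1) / ‖x‖`, which vanishes for `n = 4`, `s = -1/2`.
-/

/-- The degree `−1/2` homogeneous extension `F(x) = 1/√(|x| − ⟨x,y⟩)` of the Green
function of the conformal Laplacian on the round `S³` with pole at `y`. -/
noncomputable def greenExt (y x : EuclideanSpace ℝ (Fin 4)) : ℝ :=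
  1 / Real.sqrt (‖x‖ - (inner ℝ x y : ℝ))

open Filter Topology ContinuousLinearMap
open scoped RealInnerProductSpace

section Calculus

variable {E : Type*} [NormedAddCommGroup E] [NormedSpace ℝ E]

theorem fderiv_fderiv_comp_apply_self {g : E → ℝ} {g' : E → E →L[ℝ] ℝ} {φ φ' : ℝ → ℝ}
    {φ'' : ℝ} {L : E →L[ℝ] ℝ} {x : E} (v : E)
    (hg : ∀ᶠ z in 𝓝 x, HasFDerivAt g (g' z) z) (hgv : HasFDerivAt (fun z ↦ g' z v) L x)
    (hφ : ∀ᶠ z in 𝓝 x, HasDerivAt φ (φ' (g z)) (g z)) (hφ' : HasDerivAt φ' φ'' (g x)) :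
    fderiv ℝ (fun z ↦ fderiv ℝ (φ ∘ g) z v) x v = φ'' * g' x v ^ 2 + φ' (g x) * L v := by
  have hfirst : (fun z ↦ fderiv ℝ (φ ∘ g) z v) =ᶠ[𝓝 x] fun z ↦ φ' (g z) * g' z v := by
    filter_upwards [hg, hφ] with z hgz hφz
    simp [(hφz.comp_hasFDerivAt z hgz).fderiv]
  have hprod : HasFDerivAt (fun z ↦ φ' (g z) * g' z v)
      (φ' (g x) • L + g' x v • φ'' • g' x) x :=
    (hφ'.comp_hasFDerivAt x hg.self_of_nhds).mul hgv
  rw [hfirst.fderiv_eq, hprod.fderiv]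
  simp only [add_apply, smul_apply, smul_eq_mul]
  ring

end Calculus

section InnerProductSpace

variable {E : Type*} [NormedAddCommGroup E] [InnerProductSpace ℝ E]

theorem hasFDerivAt_norm_of_ne_zero_s10 {z : E} (hz : z ≠ 0) :
    HasFDerivAt (‖·‖) (‖z‖⁻¹ • innerSL ℝ z) z := by
  have hsqrt := (hasStrictFDerivAt_norm_sq z).hasFDerivAt.sqrt
    (pow_ne_zero 2 (norm_ne_zero_iff.mpr hz))
  simp only [Real.sqrt_sq (norm_nonneg _)] at hsqrt
  refine hsqrt.congr_fderiv ?_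
  ext w
  simp only [one_div, mul_inv_rev, smul_apply, coe_innerSL_apply, nsmul_eq_mul, Nat.cast_ofNat,
    smul_eq_mul]
  field_simp

theorem hasFDerivAt_inv_norm_mul_inner (v : E) {x : E} (hx : x ≠ 0) :
    HasFDerivAt (fun z ↦ ‖z‖⁻¹ * ⟪z, v⟫)
      (‖x‖⁻¹ • innerSL ℝ v - (⟪x, v⟫ / ‖x‖ ^ 3) • innerSL ℝ x) x := by
  have hinv := (hasDerivAt_inv (norm_ne_zero_iff.mpr hx)).comp_hasFDerivAt x
    (hasFDerivAt_norm_of_ne_zero_s10 hx)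
  have hinner : HasFDerivAt (fun z ↦ ⟪z, v⟫) (innerSL ℝ v) x := by
    simpa only [coe_innerSL_apply, real_inner_comm v] using (innerSL ℝ v).hasFDerivAt
  refine (hinv.mul hinner).congr_fderiv ?_
  ext w
  simp only [Function.comp_apply, neg_smul, smul_neg, add_apply, smul_apply, coe_innerSL_apply,
    smul_eq_mul, neg_apply, sub_apply]
  field_simp
  ring

def normSubInner (y z : E) : ℝ := ‖z‖ - ⟪z, y⟫

theorem hasFDerivAt_normSubInner (y : E) {z : E} (hz : z ≠ 0) :
    HasFDerivAt (normSubInner y) (‖z‖⁻¹ • innerSL ℝ z - innerSL ℝ y) z := by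
  have hinner : HasFDerivAt (fun w ↦ ⟪w, y⟫) (innerSL ℝ y) z := by
    simpa only [coe_innerSL_apply, real_inner_comm y] using (innerSL ℝ y).hasFDerivAt
  exact (hasFDerivAt_norm_of_ne_zero_s10 hz).sub hinner

theorem ne_zero_of_inner_lt_norm {x y : E} (hx : ⟪x, y⟫ < ‖x‖) : x ≠ 0 := by
  rintro rfl
  simp at hx

theorem isOpen_inner_lt_norm (y : E) : IsOpen {z : E | ⟪z, y⟫ < ‖z‖} :=
  isOpen_lt (continuous_id.inner continuous_const) continuous_norm

theorem fderiv_fderiv_rpow_normSubInner_apply_self (y : E) (s : ℝ) {x : E} (hx : ⟪x, y⟫ < ‖x‖)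
    (v : E) :
    fderiv ℝ (fun z ↦ fderiv ℝ (fun w ↦ normSubInner y w ^ s) z v) x v =
      s * (s - 1) * normSubInner y x ^ (s - 2) * (⟪x, v⟫ / ‖x‖ - ⟪y, v⟫) ^ 2 +
        s * normSubInner y x ^ (s - 1) * (‖v‖ ^ 2 / ‖x‖ - ⟪x, v⟫ ^ 2 / ‖x‖ ^ 3) := by
  have hΩ : ∀ᶠ z in 𝓝 x, ⟪z, y⟫ < ‖z‖ := (isOpen_inner_lt_norm y).mem_nhds hx
  have hg_ne : ∀ {z : E}, ⟪z, y⟫ < ‖z‖ → normSubInner y z ≠ 0 := fun hz ↦ (sub_pos.mpr hz).ne'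
  have hgv : HasFDerivAt (fun z ↦ (‖z‖⁻¹ • innerSL ℝ z - innerSL ℝ y) v)
      (‖x‖⁻¹ • innerSL ℝ v - (⟪x, v⟫ / ‖x‖ ^ 3) • innerSL ℝ x) x := by
    simpa using (hasFDerivAt_inv_norm_mul_inner v (ne_zero_of_inner_lt_norm hx)).sub_const ⟪y, v⟫
  have hφ' := (Real.hasDerivAt_rpow_const (p := s - 1) (Or.inl (hg_ne hx))).const_mul s
  rw [sub_sub, one_add_one_eq_two] at hφ'
  refine (fderiv_fderiv_comp_apply_self (φ := fun t ↦ t ^ s) v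
    (hΩ.mono fun z hz ↦ hasFDerivAt_normSubInner y (ne_zero_of_inner_lt_norm hz)) hgv
    (hΩ.mono fun z hz ↦ Real.hasDerivAt_rpow_const (Or.inl (hg_ne hz))) hφ').trans ?_
  simp only [sub_apply, smul_apply, innerSL_apply_apply, real_inner_self_eq_norm_sq, smul_eq_mul]
  ring

theorem sum_fderiv_fderiv_rpow_normSubInner {ι : Type*} [Fintype ι] (b : OrthonormalBasis ι ℝ E)
    {y : E} (hy : ‖y‖ = 1) (s : ℝ) {x : E} (hx : ⟪x, y⟫ < ‖x‖) :
    ∑ i, fderiv ℝ (fun z ↦ fderiv ℝ (fun w ↦ normSubInner y w ^ s) z (b i)) x (b i) =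
      s * (2 * s + Fintype.card ι - 3) * normSubInner y x ^ (s - 1) / ‖x‖ := by
  have hr : ‖x‖ ≠ 0 := norm_ne_zero_iff.mpr (ne_zero_of_inner_lt_norm hx)
  have hg : normSubInner y x ≠ 0 := (sub_pos.mpr hx).ne'
  have hgrad : ∑ i, (⟪x, b i⟫ / ‖x‖ - ⟪y, b i⟫) ^ 2 = 2 * normSubInner y x / ‖x‖ := by
    have hxy : ∑ i, ⟪x, b i⟫ * ⟪y, b i⟫ = ⟪x, y⟫ := by
      simpa only [real_inner_comm y] using b.sum_inner_mul_inner x y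
    calc ∑ i, (⟪x, b i⟫ / ‖x‖ - ⟪y, b i⟫) ^ 2
        = (∑ i, ⟪x, b i⟫ ^ 2) / ‖x‖ ^ 2 - 2 * (∑ i, ⟪x, b i⟫ * ⟪y, b i⟫) / ‖x‖ +
            ∑ i, ⟪y, b i⟫ ^ 2 := by
          rw [Finset.mul_sum, Finset.sum_div, Finset.sum_div, ← Finset.sum_sub_distrib,
            ← Finset.sum_add_distrib]
          exact Finset.sum_congr rfl fun i _ ↦ by ring
      _ = 2 * normSubInner y x / ‖x‖ := by
          rw [b.sum_sq_inner_left, b.sum_sq_inner_left, hxy, hy, normSubInner]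
          field_simp
          ring
  have hhess : ∑ i, (‖b i‖ ^ 2 / ‖x‖ - ⟪x, b i⟫ ^ 2 / ‖x‖ ^ 3) = (Fintype.card ι - 1) / ‖x‖ := by
    rw [Finset.sum_sub_distrib, ← Finset.sum_div, ← Finset.sum_div, b.sum_sq_inner_left]
    simp only [b.orthonormal.1, one_pow, Finset.sum_const, Finset.card_univ, nsmul_eq_mul,
      mul_one]
    field_simp
  simp_rw [fderiv_fderiv_rpow_normSubInner_apply_self y s hx, Finset.sum_add_distrib,
    ← Finset.mul_sum, hgrad, hhess, show s - 2 = s - 1 - 1 by ring, Real.rpow_sub_one hg]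
  field_simp
  ring

end InnerProductSpace

theorem greenExt_eq_rpow_normSubInner {y : EuclideanSpace ℝ (Fin 4)} (hy : ‖y‖ ≤ 1) :
    greenExt y = fun x ↦ normSubInner y x ^ (-(1 / 2) : ℝ) := by
  funext x
  have hg : 0 ≤ normSubInner y x := sub_nonneg.mpr <|
    (real_inner_le_norm x y).trans (mul_le_of_le_one_right (norm_nonneg x) hy)
  rw [greenExt, Real.sqrt_eq_rpow, one_div]
  exact (Real.rpow_neg hg _).symm

/-- For a unit vector `y ∈ ℝ⁴`, the function `F(x) = 1/√(|x| − ⟨x,y⟩)` is harmonic on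
`Ω = {x : |x| > ⟨x,y⟩}` (ℝ⁴ minus the closed ray through `y`): `∑ₐ ∂²F/∂xₐ² = 0`. -/
theorem greenExt_harmonic (y : EuclideanSpace ℝ (Fin 4)) (hy : ‖y‖ = 1)
    (x : EuclideanSpace ℝ (Fin 4)) (hx : (inner ℝ x y : ℝ) < ‖x‖) :
    ∑ a : Fin 4,
      fderiv ℝ
        (fun z : EuclideanSpace ℝ (Fin 4) =>
          fderiv ℝ (greenExt y) z (EuclideanSpace.single a 1)) x
        (EuclideanSpace.single a 1) = 0 := by
  have h := sum_fderiv_fderiv_rpow_normSubInner (EuclideanSpace.basisFun (Fin 4) ℝ) hy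
    (-(1 / 2)) hx
  simp only [EuclideanSpace.basisFun_apply] at h
  rw [greenExt_eq_rpow_normSubInner hy.le, h]
  norm_num
end
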